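/- arXiv:2605.30946 — 3 statements merged into one kernel-verified Lean document; each statement's English description precedes it below -/
import Mathlib

section
/- Let g satisfy condition (g) and set f = e^g. Then the function u ↦ f'(u)·F(u) is strictly increasing on [0,∞); equivalently, f''(u)·F(u) − f'(u)/f(u) > 0 for all u ≥ 0. -/
/-! Put `f = e^g`, so that `f' = g' f` and `f'' = (g'' + g'²) f` with `g'' + g'² > 0`. The
inequality `f'' F - f'/f > 0` says `F > m := f' / (f f'') = g' / ((g'' + g'²) e^g)`. As `g'' > 0`,
we have `g' ≥ g'(0) > 0`, so `g` grows at least linearly and both `F` and `m` tend to `0` at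
infinity, while a direct computation gives
`(F - m)' = -(2 g''² - g' g''') / ((g'' + g'²)² f) < 0`.
Hence `F - m` decreases strictly to `0` and is positive. Finally `(f' F)' = f'' F - f'/f`. -/

/-- One-sided derivative on `[0, ∞)`. -/
noncomputable def dIci (g : ℝ → ℝ) : ℝ → ℝ := derivWithin g (Set.Ici 0)

/-- Condition (g): `g ∈ C³([0,∞))` with `g' > 0`, `g'' > 0`, `g'² - g'' ≥ 0`
and `2 g''² - g' g''' > 0` on `[0, ∞)`. -/
def ConditionG (g : ℝ → ℝ) : Prop :=
  ContDiffOn ℝ 3 g (Set.Ici 0) ∧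
  ∀ u : ℝ, 0 ≤ u →
    0 < dIci g u ∧
    0 < dIci (dIci g) u ∧
    0 ≤ (dIci g u) ^ 2 - dIci (dIci g) u ∧
    0 < 2 * (dIci (dIci g) u) ^ 2 - dIci g u * dIci (dIci (dIci g)) u

/-- `F(u) = ∫_u^∞ ds / f(s)`. -/
noncomputable def Fint (f : ℝ → ℝ) (u : ℝ) : ℝ := ∫ s in Set.Ioi u, (f s)⁻¹

open Set Filter Topology MeasureTheory Real

theorem hasDerivAt_integral_Ioi {h : ℝ → ℝ} {a u : ℝ} (hint : IntegrableOn h (Ioi a))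
    (hcont : ContinuousOn h (Ioi a)) (hu : a < u) :
    HasDerivAt (fun v => ∫ s in Ioi v, h s) (-h u) u := by
  have hFTC : HasDerivAt (fun v => ∫ s in a..v, h s) (h u) u :=
    intervalIntegral.integral_hasDerivAt_right
      ((intervalIntegrable_iff_integrableOn_Ioc_of_le hu.le).2
        (hint.mono_set Ioc_subset_Ioi_self))
      (hcont.stronglyMeasurableAtFilter isOpen_Ioi u hu) (hcont.continuousAt (Ioi_mem_nhds hu))
  refine (hFTC.const_sub (∫ s in Ioi a, h s)).congr_of_eventuallyEq ?_
  filter_upwards [Ioi_mem_nhds hu] with v hv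
  rw [← intervalIntegral.integral_Ioi_sub_Ioi hint hv.le, sub_sub_cancel]

theorem mul_sub_le_sub_of_le_hasDerivWithinAt {g g' : ℝ → ℝ} {a c : ℝ}
    (hg : ∀ u ∈ Ici a, HasDerivWithinAt g (g' u) (Ici a) u) (hc : ∀ u ∈ Ioi a, c ≤ g' u)
    {u : ℝ} (hu : a ≤ u) : c * (u - a) ≤ g u - g a := by
  have hderiv : ∀ v ∈ Ioi a, HasDerivAt g (g' v) v := fun v hv =>
    (hg v (Ioi_subset_Ici_self hv)).hasDerivAt (Ici_mem_nhds hv)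
  refine (convex_Ici a).mul_sub_le_image_sub_of_le_deriv
    (fun v hv => (hg v hv).continuousWithinAt) (fun v hv => ?_) (fun v hv => ?_)
    a self_mem_Ici u hu hu
  · rw [interior_Ici] at hv
    exact (hderiv v hv).differentiableAt.differentiableWithinAt
  · rw [interior_Ici] at hv
    exact (hderiv v hv).deriv ▸ hc v hv

theorem StrictAntiOn.pos_of_tendsto_atTop_zero {φ : ℝ → ℝ} {a u : ℝ}
    (hφ : StrictAntiOn φ (Ici a)) (hlim : Tendsto φ atTop (𝓝 0)) (hu : a ≤ u) : 0 < φ u := by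
  have hu' : u + 1 ∈ Ici a := le_trans hu (le_add_of_nonneg_right zero_le_one)
  have hnext : 0 ≤ φ (u + 1) := by
    refine le_of_tendsto hlim ?_
    filter_upwards [eventually_ge_atTop (u + 1)] with w hw
    exact hφ.antitoneOn hu' (le_trans hu' hw) hw
  exact hnext.trans_lt (hφ hu hu' (lt_add_one u))

theorem integrableOn_exp_neg_of_add_mul_le {g : ℝ → ℝ} {a b c : ℝ} (hc : 0 < c)
    (hg : ContinuousOn g (Ioi a)) (hle : ∀ s ∈ Ioi a, b + c * s ≤ g s) :
    IntegrableOn (fun s => exp (-g s)) (Ioi a) := by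
  refine Integrable.mono' ((exp_neg_integrableOn_Ioi a hc).const_mul (exp (-b)))
    ((continuous_exp.comp_continuousOn hg.neg).aestronglyMeasurable measurableSet_Ioi) ?_
  filter_upwards [ae_restrict_mem measurableSet_Ioi] with s hs
  rw [norm_of_nonneg (exp_pos _).le, ← exp_add, exp_le_exp]
  linarith [hle s hs]

section LogDerivative

variable {f g₁ g₂ g₃ : ℝ → ℝ} {s : Set ℝ} {x : ℝ}

theorem hasDerivWithinAt_mul_of_logDeriv
    (hf : HasDerivWithinAt f (g₁ x * f x) s x) (h₁ : HasDerivWithinAt g₁ (g₂ x) s x) :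
    HasDerivWithinAt (fun u => g₁ u * f u) ((g₂ x + g₁ x ^ 2) * f x) s x :=
  (h₁.fun_mul hf).congr_deriv (by ring)

theorem hasDerivWithinAt_div_add_sq_mul_of_logDeriv
    (hf : HasDerivWithinAt f (g₁ x * f x) s x) (h₁ : HasDerivWithinAt g₁ (g₂ x) s x)
    (h₂ : HasDerivWithinAt g₂ (g₃ x) s x) (hfx : f x ≠ 0) (hB : g₂ x + g₁ x ^ 2 ≠ 0) :
    HasDerivWithinAt (fun u => g₁ u / ((g₂ u + g₁ u ^ 2) * f u))
      ((2 * g₂ x ^ 2 - g₁ x * g₃ x) / ((g₂ x + g₁ x ^ 2) ^ 2 * f x) - (f x)⁻¹) s x := by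
  have hden := (h₂.fun_add (h₁.fun_pow 2)).fun_mul hf
  refine (h₁.fun_div hden (mul_ne_zero hB hfx)).congr_deriv ?_
  field_simp
  ring

end LogDerivative

theorem ContDiffOn.hasDerivWithinAt_dIci {φ : ℝ → ℝ} {n : WithTop ℕ∞}
    (h : ContDiffOn ℝ n φ (Ici 0)) (hn : n ≠ 0) {u : ℝ} (hu : 0 ≤ u) :
    HasDerivWithinAt φ (dIci φ u) (Ici 0) u :=
  (h.differentiableOn hn u hu).hasDerivWithinAt

theorem HasDerivWithinAt.dIci_eq {φ : ℝ → ℝ} {φ' u : ℝ} (h : HasDerivWithinAt φ φ' (Ici 0) u)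
    (hu : 0 ≤ u) : dIci φ u = φ' :=
  h.derivWithin (uniqueDiffOn_Ici 0 u hu)

noncomputable def fintMinorant (f : ℝ → ℝ) (u : ℝ) : ℝ := dIci f u / (f u * dIci (dIci f) u)

theorem mul_Fint_sub_fintMinorant {f : ℝ → ℝ} {u : ℝ} (hf : f u ≠ 0)
    (hf'' : dIci (dIci f) u ≠ 0) :
    dIci (dIci f) u * (Fint f u - fintMinorant f u) =
      dIci (dIci f) u * Fint f u - dIci f u / f u := by
  unfold fintMinorant
  field_simp

namespace ConditionG

variable {g f : ℝ → ℝ} {u : ℝ}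

theorem hasDerivWithinAt (hg : ConditionG g) (hu : 0 ≤ u) :
    HasDerivWithinAt g (dIci g u) (Ici 0) u :=
  hg.1.hasDerivWithinAt_dIci (by norm_num) hu

theorem contDiffOn_dIci (hg : ConditionG g) : ContDiffOn ℝ 2 (dIci g) (Ici 0) :=
  hg.1.derivWithin (uniqueDiffOn_Ici 0) (by norm_num)

theorem hasDerivWithinAt_dIci (hg : ConditionG g) (hu : 0 ≤ u) :
    HasDerivWithinAt (dIci g) (dIci (dIci g) u) (Ici 0) u :=
  hg.contDiffOn_dIci.hasDerivWithinAt_dIci (by norm_num) hu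

theorem hasDerivWithinAt_dIci_dIci (hg : ConditionG g) (hu : 0 ≤ u) :
    HasDerivWithinAt (dIci (dIci g)) (dIci (dIci (dIci g)) u) (Ici 0) u :=
  ContDiffOn.hasDerivWithinAt_dIci
    (hg.contDiffOn_dIci.derivWithin (m := 1) (uniqueDiffOn_Ici 0) (by norm_num)) (by norm_num) hu

theorem dIci_dIci_add_sq_pos (hg : ConditionG g) (hu : 0 ≤ u) :
    0 < dIci (dIci g) u + dIci g u ^ 2 := by
  have := (hg.2 u hu).2.1
  positivity

theorem dIci_zero_le (hg : ConditionG g) (hu : 0 ≤ u) : dIci g 0 ≤ dIci g u := by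
  have := mul_sub_le_sub_of_le_hasDerivWithinAt (c := 0)
    (fun v hv => hg.hasDerivWithinAt_dIci hv) (fun v hv => (hg.2 v (le_of_lt hv)).2.1.le) hu
  linarith

theorem add_mul_le (hg : ConditionG g) (hu : 0 ≤ u) : g 0 + dIci g 0 * u ≤ g u := by
  have := mul_sub_le_sub_of_le_hasDerivWithinAt (fun v hv => hg.hasDerivWithinAt hv)
    (fun v hv => hg.dIci_zero_le (le_of_lt hv)) hu
  linarith

theorem tendsto_exp_neg (hg : ConditionG g) : Tendsto (fun u => exp (-g u)) atTop (𝓝 0) := by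
  have hlin : Tendsto (fun u => g 0 + dIci g 0 * u) atTop atTop :=
    tendsto_atTop_add_const_left _ _ (tendsto_id.const_mul_atTop (hg.2 0 le_rfl).1)
  refine tendsto_exp_neg_atTop_nhds_zero.comp (tendsto_atTop_mono' _ ?_ hlin)
  filter_upwards [eventually_ge_atTop 0] with v hv using hg.add_mul_le hv

theorem integrableOn_inv (hg : ConditionG g) (hf : ∀ u, f u = exp (g u)) :
    IntegrableOn (fun s => (f s)⁻¹) (Ioi 0) := by
  simpa only [hf, exp_neg] using integrableOn_exp_neg_of_add_mul_le (hg.2 0 le_rfl).1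
    (hg.1.continuousOn.mono Ioi_subset_Ici_self) (fun s hs => hg.add_mul_le (le_of_lt hs))

theorem hasDerivWithinAt_exp (hg : ConditionG g) (hf : ∀ u, f u = exp (g u)) (hu : 0 ≤ u) :
    HasDerivWithinAt f (dIci g u * f u) (Ici 0) u := by
  obtain rfl : f = fun v => exp (g v) := funext hf
  exact (hg.hasDerivWithinAt hu).exp.congr_deriv (mul_comm _ _)

theorem hasDerivWithinAt_dIci_exp (hg : ConditionG g) (hf : ∀ u, f u = exp (g u))
    (hu : 0 ≤ u) :
    HasDerivWithinAt (dIci f) ((dIci (dIci g) u + dIci g u ^ 2) * f u) (Ici 0) u :=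
  (hasDerivWithinAt_mul_of_logDeriv (hg.hasDerivWithinAt_exp hf hu)
    (hg.hasDerivWithinAt_dIci hu)).congr
    (fun _ hv => (hg.hasDerivWithinAt_exp hf hv).dIci_eq hv)
    ((hg.hasDerivWithinAt_exp hf hu).dIci_eq hu)

theorem dIci_dIci_exp_pos (hg : ConditionG g) (hf : ∀ u, f u = exp (g u)) (hu : 0 ≤ u) :
    0 < dIci (dIci f) u := by
  rw [(hg.hasDerivWithinAt_dIci_exp hf hu).dIci_eq hu, hf]
  exact mul_pos (hg.dIci_dIci_add_sq_pos hu) (exp_pos _)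

theorem fintMinorant_eqOn (hg : ConditionG g) (hf : ∀ u, f u = exp (g u)) :
    EqOn (fintMinorant f) (fun u => dIci g u / ((dIci (dIci g) u + dIci g u ^ 2) * f u))
      (Ici 0) := by
  intro u hu
  simp only [fintMinorant, (hg.hasDerivWithinAt_exp hf hu).dIci_eq hu,
    (hg.hasDerivWithinAt_dIci_exp hf hu).dIci_eq hu]
  field_simp

theorem hasDerivWithinAt_fintMinorant (hg : ConditionG g) (hf : ∀ u, f u = exp (g u))
    (hu : 0 ≤ u) :
    HasDerivWithinAt (fintMinorant f)
      ((2 * dIci (dIci g) u ^ 2 - dIci g u * dIci (dIci (dIci g)) u) /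
          ((dIci (dIci g) u + dIci g u ^ 2) ^ 2 * f u) - (f u)⁻¹) (Ici 0) u :=
  (hasDerivWithinAt_div_add_sq_mul_of_logDeriv (hg.hasDerivWithinAt_exp hf hu)
    (hg.hasDerivWithinAt_dIci hu) (hg.hasDerivWithinAt_dIci_dIci hu) (hf u ▸ exp_ne_zero _)
    (hg.dIci_dIci_add_sq_pos hu).ne').congr
    (hg.fintMinorant_eqOn hf) (hg.fintMinorant_eqOn hf hu)

theorem hasDerivAt_Fint (hg : ConditionG g) (hf : ∀ u, f u = exp (g u)) (hu : 0 < u) :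
    HasDerivAt (Fint f) (-(f u)⁻¹) u := by
  have hcont : ContinuousOn f (Ioi 0) := fun v hv =>
    (hg.hasDerivWithinAt_exp hf (le_of_lt hv)).continuousWithinAt.mono Ioi_subset_Ici_self
  exact hasDerivAt_integral_Ioi (hg.integrableOn_inv hf)
    (hcont.inv₀ fun v _ => hf v ▸ exp_ne_zero _) hu

theorem hasDerivAt_Fint_sub_fintMinorant (hg : ConditionG g) (hf : ∀ u, f u = exp (g u))
    (hu : 0 < u) :
    HasDerivAt (fun v => Fint f v - fintMinorant f v)
      (-((2 * dIci (dIci g) u ^ 2 - dIci g u * dIci (dIci (dIci g)) u) /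
          ((dIci (dIci g) u + dIci g u ^ 2) ^ 2 * f u))) u :=
  ((hg.hasDerivAt_Fint hf hu).sub ((hg.hasDerivWithinAt_fintMinorant hf hu.le).hasDerivAt
    (Ici_mem_nhds hu))).congr_deriv (by ring)

theorem strictAntiOn_Fint_sub_fintMinorant (hg : ConditionG g) (hf : ∀ u, f u = exp (g u)) :
    StrictAntiOn (fun u => Fint f u - fintMinorant f u) (Ici 0) := by
  refine strictAntiOn_of_hasDerivWithinAt_neg (convex_Ici 0)
    ((hg.integrableOn_inv hf).continuousOn_Ici_primitive_Ioi.sub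
      fun u hu => (hg.hasDerivWithinAt_fintMinorant hf hu).continuousWithinAt)
    (fun u hu => (hg.hasDerivAt_Fint_sub_fintMinorant hf
      (by rwa [interior_Ici] at hu)).hasDerivWithinAt) (fun u hu => ?_)
  rw [interior_Ici] at hu
  have hden := mul_pos (pow_pos (hg.dIci_dIci_add_sq_pos hu.le) 2) (hf u ▸ exp_pos (g u))
  exact neg_neg_of_pos (div_pos (hg.2 u hu.le).2.2.2 hden)

theorem tendsto_fintMinorant (hg : ConditionG g) (hf : ∀ u, f u = exp (g u)) :
    Tendsto (fintMinorant f) atTop (𝓝 0) := by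
  refine squeeze_zero' ?_ ?_ (by simpa using hg.tendsto_exp_neg.const_mul (dIci g 0)⁻¹)
  · filter_upwards [eventually_ge_atTop 0] with u hu
    simp only [hg.fintMinorant_eqOn hf hu, hf]
    have := (hg.2 u hu).1
    have := hg.dIci_dIci_add_sq_pos hu
    positivity
  · filter_upwards [eventually_ge_atTop 0] with u hu
    simp only [hg.fintMinorant_eqOn hf hu, hf, exp_neg]
    have := (hg.2 0 le_rfl).1
    have := (hg.2 u hu).2.1
    have := hg.dIci_zero_le hu
    rw [div_le_iff₀ (by positivity)]
    field_simp
    nlinarith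

theorem fintMinorant_lt_Fint (hg : ConditionG g) (hf : ∀ u, f u = exp (g u)) (hu : 0 ≤ u) :
    fintMinorant f u < Fint f u := by
  have hlim : Tendsto (Fint f) atTop (𝓝 0) := tendsto_integral_Ioi_zero tendsto_id
  exact sub_pos.1 ((hg.strictAntiOn_Fint_sub_fintMinorant hf).pos_of_tendsto_atTop_zero
    (by simpa using hlim.sub (hg.tendsto_fintMinorant hf)) hu)

end ConditionG

/-- If `g` satisfies condition (g) and `f = e^g`, then `u ↦ f'(u) F(u)` is
strictly increasing on `[0,∞)`; equivalently `f''(u) F(u) - f'(u)/f(u) > 0`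
for all `u ≥ 0`. -/
theorem fp_mul_Fint_strictMono
    (g : ℝ → ℝ) (hg : ConditionG g)
    (f : ℝ → ℝ) (hf : ∀ u : ℝ, f u = Real.exp (g u)) :
    StrictMonoOn (fun u => dIci f u * Fint f u) (Set.Ici 0) ∧
    ∀ u : ℝ, 0 ≤ u → 0 < dIci (dIci f) u * Fint f u - dIci f u / f u := by
  have hpos : ∀ u : ℝ, 0 ≤ u → 0 < dIci (dIci f) u * Fint f u - dIci f u / f u := by
    intro u hu
    rw [← mul_Fint_sub_fintMinorant (hf u ▸ exp_ne_zero _) (hg.dIci_dIci_exp_pos hf hu).ne']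
    exact mul_pos (hg.dIci_dIci_exp_pos hf hu) (sub_pos.2 (hg.fintMinorant_lt_Fint hf hu))
  have hcont : ContinuousOn (fun u => dIci f u * Fint f u) (Ici 0) :=
    ContinuousOn.mul (fun u hu => (hg.hasDerivWithinAt_dIci_exp hf hu).continuousWithinAt)
      (hg.integrableOn_inv hf).continuousOn_Ici_primitive_Ioi
  have hderiv : ∀ u ∈ Ioi (0 : ℝ),
      HasDerivAt (fun u => dIci f u * Fint f u)
        (dIci (dIci f) u * Fint f u - dIci f u / f u) u := by
    intro u hu
    have hf'' := hg.hasDerivWithinAt_dIci_exp hf (le_of_lt hu)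
    rw [← hf''.dIci_eq (le_of_lt hu)] at hf''
    exact ((hf''.hasDerivAt (Ici_mem_nhds hu)).mul (hg.hasDerivAt_Fint hf hu)).congr_deriv
      (by ring)
  refine ⟨strictMonoOn_of_hasDerivWithinAt_pos (convex_Ici 0) hcont
    (fun u hu => (hderiv u (by rwa [interior_Ici] at hu)).hasDerivWithinAt)
    (fun u hu => hpos u (le_of_lt (by rwa [interior_Ici] at hu))), hpos⟩
end

section
/- Let g ∈ C²([0,∞)) with g'(u) > 0 and g''(u) > 0 for all u ≥ 0, and set f = e^g. Then ∫₀^∞ ds/f(s) < ∞, and for every u ≥ 0 one has the identity f'(u)·F(u) = 1 − g'(u)·e^{g(u)}·∫_u^∞ e^{−g(s)}·(g''(s)/g'(s)²) ds; in particular f'(u)·F(u) < 1 for all u ≥ 0. -/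
/-!
With `φ = -e^{-g} / g'` one has `φ' = e^{-g} (1 + g'' / g'²) ≥ 0`. As `g'` is increasing, `g` grows
at least linearly, so `φ → 0` at infinity and `∫_u^∞ e^{-g} (1 + g'' / g'²) = e^{-g(u)} / g'(u)`.
Multiplying by `f'(u) = g'(u) e^{g(u)}` and moving the strictly positive `g''`-term to the other
side gives the identity and the strict bound.
-/

open Set Filter Topology MeasureTheory Real

lemma hasDerivAt_dIci {g : ℝ → ℝ} (hg : DifferentiableOn ℝ g (Ici 0)) {s : ℝ} (hs : 0 < s) :
    HasDerivAt g (dIci g s) s := by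
  have hmem : Ici (0 : ℝ) ∈ 𝓝 s := Ici_mem_nhds hs
  rw [dIci, derivWithin_of_mem_nhds hmem]
  exact (hg.differentiableAt hmem).hasDerivAt

lemma dIci_exp_comp {g : ℝ → ℝ} {u : ℝ} (hg : DifferentiableWithinAt ℝ g (Ici 0) u) (hu : 0 ≤ u) :
    dIci (fun x => exp (g x)) u = exp (g u) * dIci g u :=
  hg.hasDerivWithinAt.exp.derivWithin (uniqueDiffOn_Ici 0 u hu)

lemma Fint_exp (g : ℝ → ℝ) (u : ℝ) :
    Fint (fun x => exp (g x)) u = ∫ s in Ioi u, exp (-g s) := by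
  simp only [Fint, exp_neg]

lemma setIntegral_Ioi_pos {f : ℝ → ℝ} {u : ℝ} (hf : IntegrableOn f (Ioi u))
    (hpos : ∀ s > u, 0 < f s) : 0 < ∫ s in Ioi u, f s := by
  rw [setIntegral_pos_iff_support_of_nonneg_ae
    ((ae_restrict_iff' measurableSet_Ioi).2 (Eventually.of_forall fun s hs => (hpos s hs).le)) hf]
  calc (0 : ENNReal) < volume (Ioi u) := by simp
    _ ≤ volume (Function.support f ∩ Ioi u) := measure_mono fun s hs => ⟨(hpos s hs).ne', hs⟩

lemma monotoneOn_Ici_of_hasDerivAt_nonneg {f f' : ℝ → ℝ} {u : ℝ} (hf : ContinuousOn f (Ici u))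
    (hd : ∀ s > u, HasDerivAt f (f' s) s) (hnonneg : ∀ s > u, 0 ≤ f' s) : MonotoneOn f (Ici u) :=
  monotoneOn_of_hasDerivWithinAt_nonneg (convex_Ici u) hf
    (fun s hs => (hd s (by simpa using hs)).hasDerivWithinAt)
    (fun s hs => hnonneg s (by simpa using hs))

lemma tendsto_atTop_of_le_deriv {g g' : ℝ → ℝ} {u c : ℝ} (hc : 0 < c)
    (hgc : ContinuousOn g (Ici u)) (hg : ∀ s > u, HasDerivAt g (g' s) s)
    (hle : ∀ s > u, c ≤ g' s) : Tendsto g atTop atTop := by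
  have hlin : ∀ s ≥ u, c * s + (g u - c * u) ≤ g s := by
    intro s hs
    have := (convex_Ici u).mul_sub_le_image_sub_of_le_deriv hgc
      (fun x hx => (hg x (by simpa using hx)).differentiableAt.differentiableWithinAt)
      (fun x hx => by rw [(hg x (by simpa using hx)).deriv]; exact hle x (by simpa using hx))
      u self_mem_Ici s hs hs
    linarith
  refine tendsto_atTop_mono' atTop (eventually_ge_atTop u |>.mono hlin) ?_
  exact (tendsto_id.const_mul_atTop hc).atTop_add tendsto_const_nhds

section ExpNegIntegral

variable {g g' g'' : ℝ → ℝ} {u : ℝ}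

lemma hasDerivAt_neg_exp_neg_div {s : ℝ} (hg : HasDerivAt g (g' s) s)
    (hg' : HasDerivAt g' (g'' s) s) (hne : g' s ≠ 0) :
    HasDerivAt (fun x => -(exp (-g x) / g' x)) (exp (-g s) * (1 + g'' s / g' s ^ 2)) s := by
  refine (hg.neg.exp.div hg' hne).neg.congr_deriv ?_
  simp only [Pi.neg_apply]
  field_simp
  ring

lemma tendsto_exp_neg_div_atTop (hgc : ContinuousOn g (Ici u)) (hg'c : ContinuousOn g' (Ici u))
    (hg : ∀ s > u, HasDerivAt g (g' s) s) (hg' : ∀ s > u, HasDerivAt g' (g'' s) s)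
    (hpos : 0 < g' u) (hconv : ∀ s > u, 0 ≤ g'' s) :
    Tendsto (fun s => exp (-g s) / g' s) atTop (𝓝 0) := by
  have hle : ∀ s ≥ u, g' u ≤ g' s := fun s hs =>
    monotoneOn_Ici_of_hasDerivAt_nonneg hg'c hg' hconv self_mem_Ici hs hs
  have hexp : Tendsto (fun s => exp (-g s)) atTop (𝓝 0) :=
    tendsto_exp_neg_atTop_nhds_zero.comp
      (tendsto_atTop_of_le_deriv hpos hgc hg fun s hs => hle s hs.le)
  refine tendsto_of_tendsto_of_tendsto_of_le_of_le' tendsto_const_nhds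
    (by simpa using hexp.div_const (g' u)) ?_ ?_
  · filter_upwards [eventually_ge_atTop u] with s hs
    exact div_nonneg (exp_pos _).le (hpos.trans_le (hle s hs)).le
  · filter_upwards [eventually_ge_atTop u] with s hs
    exact div_le_div_of_nonneg_left (exp_pos _).le hpos (hle s hs)

theorem integral_Ioi_exp_neg_mul_one_add (hgc : ContinuousOn g (Ici u))
    (hg'c : ContinuousOn g' (Ici u)) (hg : ∀ s > u, HasDerivAt g (g' s) s)
    (hg' : ∀ s > u, HasDerivAt g' (g'' s) s) (hpos : 0 < g' u) (hconv : ∀ s > u, 0 ≤ g'' s) :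
    IntegrableOn (fun s => exp (-g s) * (1 + g'' s / g' s ^ 2)) (Ioi u) ∧
      ∫ s in Ioi u, exp (-g s) * (1 + g'' s / g' s ^ 2) = exp (-g u) / g' u := by
  have hne : ∀ s ≥ u, g' s ≠ 0 := fun s hs =>
    (hpos.trans_le (monotoneOn_Ici_of_hasDerivAt_nonneg hg'c hg' hconv self_mem_Ici hs hs)).ne'
  have hcont : ContinuousWithinAt (fun s => -(exp (-g s) / g' s)) (Ici u) u :=
    ((hgc.neg.rexp.div hg'c hne).neg) u self_mem_Ici
  have hderiv : ∀ s ∈ Ioi u, HasDerivAt (fun s => -(exp (-g s) / g' s))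
      (exp (-g s) * (1 + g'' s / g' s ^ 2)) s := fun s hs =>
    hasDerivAt_neg_exp_neg_div (hg s hs) (hg' s hs) (hne s (le_of_lt hs))
  have hnonneg : ∀ s ∈ Ioi u, 0 ≤ exp (-g s) * (1 + g'' s / g' s ^ 2) := fun s hs => by
    have := hconv s hs
    positivity
  have htend : Tendsto (fun s => -(exp (-g s) / g' s)) atTop (𝓝 0) := by
    simpa using (tendsto_exp_neg_div_atTop hgc hg'c hg hg' hpos hconv).neg
  refine ⟨integrableOn_Ioi_deriv_of_nonneg hcont hderiv hnonneg htend, ?_⟩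
  rw [integral_Ioi_of_hasDerivAt_of_nonneg hcont hderiv hnonneg htend, zero_sub, neg_neg]

theorem integral_Ioi_exp_neg_eq_sub (hgc : ContinuousOn g (Ici u))
    (hg'c : ContinuousOn g' (Ici u)) (hg : ∀ s > u, HasDerivAt g (g' s) s)
    (hg' : ∀ s > u, HasDerivAt g' (g'' s) s) (hpos : 0 < g' u) (hconv : ∀ s > u, 0 ≤ g'' s) :
    IntegrableOn (fun s => exp (-g s)) (Ioi u) ∧
      IntegrableOn (fun s => exp (-g s) * (g'' s / g' s ^ 2)) (Ioi u) ∧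
      ∫ s in Ioi u, exp (-g s) =
        exp (-g u) / g' u - ∫ s in Ioi u, exp (-g s) * (g'' s / g' s ^ 2) := by
  obtain ⟨hint, heq⟩ := integral_Ioi_exp_neg_mul_one_add hgc hg'c hg hg' hpos hconv
  have hint₁ : IntegrableOn (fun s => exp (-g s)) (Ioi u) := by
    refine hint.mono' ((hgc.mono Ioi_subset_Ici_self).neg.rexp.aestronglyMeasurable
      measurableSet_Ioi) ((ae_restrict_iff' measurableSet_Ioi).2 (Eventually.of_forall ?_))
    intro s hs
    rw [norm_of_nonneg (exp_pos _).le]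
    exact le_mul_of_one_le_right (exp_pos _).le
      (le_add_of_nonneg_right (div_nonneg (hconv s hs) (sq_nonneg _)))
  have hint₂ : IntegrableOn (fun s => exp (-g s) * (g'' s / g' s ^ 2)) (Ioi u) :=
    (hint.sub hint₁).congr_fun (fun s _ => by simp only [Pi.sub_apply]; ring) measurableSet_Ioi
  refine ⟨hint₁, hint₂, ?_⟩
  calc ∫ s in Ioi u, exp (-g s)
      = ∫ s in Ioi u, (exp (-g s) * (1 + g'' s / g' s ^ 2) - exp (-g s) * (g'' s / g' s ^ 2)) := by
        congr 1 with s
        ring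
    _ = _ := by rw [integral_sub hint hint₂, heq]

end ExpNegIntegral

/-- If `g ∈ C²([0,∞))` with `g' > 0` and `g'' > 0`, and `f = e^g`, then `1/f`
is integrable on `(0,∞)` and
`f'(u) F(u) = 1 - g'(u) e^{g(u)} ∫_u^∞ e^{-g(s)} (g''(s)/g'(s)²) ds < 1`
for all `u ≥ 0`. -/
theorem fp_mul_Fint_identity_lt_one
    (g : ℝ → ℝ)
    (hg : ContDiffOn ℝ 2 g (Set.Ici 0))
    (h1 : ∀ u : ℝ, 0 ≤ u → 0 < dIci g u)
    (h2 : ∀ u : ℝ, 0 ≤ u → 0 < dIci (dIci g) u)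
    (f : ℝ → ℝ) (hf : ∀ u : ℝ, f u = Real.exp (g u)) :
    MeasureTheory.IntegrableOn (fun s => (f s)⁻¹) (Set.Ioi 0) ∧
    ∀ u : ℝ, 0 ≤ u →
      dIci f u * Fint f u
        = 1 - dIci g u * Real.exp (g u) *
            ∫ s in Set.Ioi u, Real.exp (-g s) * (dIci (dIci g) s / (dIci g s) ^ 2) ∧
      dIci f u * Fint f u < 1 := by
  obtain rfl : f = fun x => exp (g x) := funext hf
  have hgd : DifferentiableOn ℝ g (Ici 0) := hg.differentiableOn two_ne_zero
  have hg' : ContDiffOn ℝ 1 (dIci g) (Ici 0) := hg.derivWithin (uniqueDiffOn_Ici 0) le_rfl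
  have key : ∀ u ≥ (0 : ℝ), _ := fun u hu =>
    integral_Ioi_exp_neg_eq_sub (hg.continuousOn.mono (Ici_subset_Ici.2 hu))
      (hg'.continuousOn.mono (Ici_subset_Ici.2 hu))
      (fun s hs => hasDerivAt_dIci hgd (hu.trans_lt hs))
      (fun s hs => hasDerivAt_dIci (hg'.differentiableOn one_ne_zero) (hu.trans_lt hs))
      (h1 u hu) (fun s hs => (h2 s (hu.trans hs.le)).le)
  refine ⟨(key 0 le_rfl).1.congr_fun (fun s _ => exp_neg _) measurableSet_Ioi, fun u hu => ?_⟩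
  obtain ⟨-, hint, heq⟩ := key u hu
  have hpos : 0 < ∫ s in Ioi u, exp (-g s) * (dIci (dIci g) s / dIci g s ^ 2) :=
    setIntegral_Ioi_pos hint fun s hs => by
      have := h1 s (hu.trans hs.le)
      have := h2 s (hu.trans hs.le)
      positivity
  have hexp : exp (g u) * exp (-g u) = 1 := by rw [← exp_add, add_neg_cancel, exp_zero]
  have hidentity : dIci (fun x => exp (g x)) u * Fint (fun x => exp (g x)) u
      = 1 - dIci g u * exp (g u) *
          ∫ s in Ioi u, exp (-g s) * (dIci (dIci g) s / dIci g s ^ 2) := by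
    rw [dIci_exp_comp (hgd u hu) hu, Fint_exp, heq, mul_sub, mul_div_assoc',
      mul_right_comm, mul_div_cancel_right₀ _ (h1 u hu).ne', hexp, mul_comm (exp (g u))]
  refine ⟨hidentity, hidentity ▸ ?_⟩
  have := mul_pos (mul_pos (h1 u hu) (exp_pos (g u))) hpos
  linarith
end

section
/- Let y₀ ∈ ℝ and let h ∈ C²([y₀,∞)) satisfy h(y) ≥ 0, h'(y) < 0, and h''(y) ≥ 4·h'(y) for all y ≥ y₀. Let t₀ ∈ ℝ and let x ∈ C²([t₀,∞)) satisfy 4·(e^{x(t)} − 1) = h(ξ(t)) and ξ(t) ≥ y₀ for all t ≥ t₀, where ξ(t) = x(t) + 2t + log 16. Then x''(t) − 8·x'(t) + 16·(e^{x(t)} − 1) − h(ξ(t))·(x'(t) + 2)² ≥ 0 for all t ≥ t₀. -/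
/-!
Differentiating the relation `4(eˣ - 1) = h(ξ)` once and twice along `ξ' = x' + 2` expresses
`x'` and `x''` through `E = eˣ`, `P = h'(ξ)` and `Q = h''(ξ)`: with `D = 4E - P > 0` one gets
`x' D = 2P` and `(x' + 2) D = 8E`, so `-2 < x' < 0`. Multiplying the claimed inequality by `D`
and using `Q ≥ 4P` reduces it to `P x' (3x' + 14) + h(ξ) (-x') (x' + 4) D ≥ 0`, where both terms
are visibly nonnegative.
-/

open Set Real

lemma HasDerivWithinAt.eq_of_eqOn {s : Set ℝ} {f g : ℝ → ℝ} {f' g' t : ℝ}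
    (hf : HasDerivWithinAt f f' s t) (hg : HasDerivWithinAt g g' s t) (hfg : EqOn f g s)
    (hs : UniqueDiffWithinAt ℝ s t) (ht : t ∈ s) : f' = g' :=
  hs.eq_deriv s (hf.congr (fun _ hu => (hfg hu).symm) (hfg ht).symm) hg

lemma HasDerivWithinAt.comp_add_two_mul_add {s s' : Set ℝ} {g x : ℝ → ℝ} {g' x' c t : ℝ}
    (hg : HasDerivWithinAt g g' s' (x t + 2 * t + c)) (hx : HasDerivWithinAt x x' s t)
    (hmaps : MapsTo (fun u => x u + 2 * u + c) s s') :
    HasDerivWithinAt (fun u => g (x u + 2 * u + c)) (g' * (x' + 2)) s t :=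
  hg.comp t (((hx.add ((hasDerivWithinAt_id t s).const_mul 2)).add_const c).congr_deriv
    (by ring)) hmaps

lemma nonneg_of_differentiated_relation {E H P Q a b : ℝ} (hE : 0 < E) (hH : 0 ≤ H)
    (hP : P < 0) (hQ : 4 * P ≤ Q) (h₁ : 4 * E * a = P * (a + 2))
    (h₂ : 4 * E * (a ^ 2 + b) = Q * (a + 2) ^ 2 + P * b) :
    0 ≤ b - 8 * a + 4 * H - H * (a + 2) ^ 2 := by
  set D := 4 * E - P
  have hD : 0 < D := by linarith
  have ha : a * D = 2 * P := by linear_combination h₁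
  have hs : (a + 2) * D = 8 * E := by linear_combination h₁
  have ha_neg : a < 0 := by nlinarith
  have ha_gt : -2 < a := by nlinarith
  have hb : b * D = Q * (a + 2) ^ 2 - 4 * E * a ^ 2 := by linear_combination h₂
  have key : P * a * (3 * a + 14) + H * (-a) * (a + 4) * D
      ≤ (b - 8 * a + 4 * H - H * (a + 2) ^ 2) * D := by
    nlinarith [mul_le_mul_of_nonneg_right hQ (sq_nonneg (a + 2))]
  have hterm₁ : 0 ≤ P * a * (3 * a + 14) :=
    mul_nonneg (mul_nonneg_of_nonpos_of_nonpos hP.le ha_neg.le) (by linarith)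
  have hterm₂ : 0 ≤ H * (-a) * (a + 4) * D := by
    have : 0 ≤ -a := by linarith
    have : 0 ≤ a + 4 := by linarith
    positivity
  exact nonneg_of_mul_nonneg_left (by linarith) hD

theorem transformed_subsolution_inequality_general
    (y₀ : ℝ) (h h' h'' : ℝ → ℝ)
    (hh' : ∀ y : ℝ, y₀ ≤ y → HasDerivWithinAt h (h' y) (Set.Ici y₀) y)
    (hh'' : ∀ y : ℝ, y₀ ≤ y → HasDerivWithinAt h' (h'' y) (Set.Ici y₀) y)
    (hnonneg : ∀ y : ℝ, y₀ ≤ y → 0 ≤ h y)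
    (hneg : ∀ y : ℝ, y₀ ≤ y → h' y < 0)
    (hconv : ∀ y : ℝ, y₀ ≤ y → 4 * h' y ≤ h'' y)
    (t₀ : ℝ) (x x' x'' : ℝ → ℝ)
    (hx' : ∀ t : ℝ, t₀ ≤ t → HasDerivWithinAt x (x' t) (Set.Ici t₀) t)
    (hx'' : ∀ t : ℝ, t₀ ≤ t → HasDerivWithinAt x' (x'' t) (Set.Ici t₀) t)
    (hrel : ∀ t : ℝ, t₀ ≤ t →
      4 * (Real.exp (x t) - 1) = h (x t + 2 * t + Real.log 16))
    (hdom : ∀ t : ℝ, t₀ ≤ t → y₀ ≤ x t + 2 * t + Real.log 16) :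
    ∀ t : ℝ, t₀ ≤ t →
      0 ≤ x'' t - 8 * x' t + 16 * (Real.exp (x t) - 1)
          - h (x t + 2 * t + Real.log 16) * (x' t + 2) ^ 2 := by
  set ξ : ℝ → ℝ := fun t => x t + 2 * t + Real.log 16
  have hmaps : MapsTo ξ (Ici t₀) (Ici y₀) := fun u hu => hdom u hu
  have hrel' : ∀ t, t₀ ≤ t → 4 * (exp (x t) * x' t) = h' (ξ t) * (x' t + 2) := fun t ht =>
    (((hx' t ht).exp.sub_const 1).const_mul 4).eq_of_eqOn
      ((hh' (ξ t) (hdom t ht)).comp_add_two_mul_add (hx' t ht) hmaps)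
      hrel (uniqueDiffOn_Ici t₀ t ht) ht
  intro t ht
  have hrel'' : 4 * (exp (x t) * x' t * x' t + exp (x t) * x'' t)
      = h'' (ξ t) * (x' t + 2) * (x' t + 2) + h' (ξ t) * x'' t :=
    (((hx' t ht).exp.mul (hx'' t ht)).const_mul 4).eq_of_eqOn
      (((hh'' (ξ t) (hdom t ht)).comp_add_two_mul_add (hx' t ht) hmaps).mul
        ((hx'' t ht).add_const 2))
      hrel' (uniqueDiffOn_Ici t₀ t ht) ht
  have hineq := nonneg_of_differentiated_relation (a := x' t) (b := x'' t) (exp_pos (x t))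
    (hnonneg _ (hdom t ht)) (hneg _ (hdom t ht)) (hconv _ (hdom t ht))
    (by linear_combination hrel' t ht) (by linear_combination hrel'')
  linear_combination hineq - 4 * hrel t ht

/-- The transformed subsolution inequality (dimension `N = 10`, `q = 1`):
if `4(e^{x(t)} - 1) = h(ξ(t))` with `ξ(t) = x(t) + 2t + log 16 ≥ y₀`, where
`h ≥ 0`, `h' < 0` and `h'' ≥ 4 h'` on `[y₀,∞)`, then
`x'' - 8x' + 16(e^x - 1) - h(ξ)(x' + 2)² ≥ 0` on `[t₀,∞)`. -/
theorem transformed_subsolution_inequality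
    (y₀ : ℝ) (h h' h'' : ℝ → ℝ)
    (hh' : ∀ y : ℝ, y₀ ≤ y → HasDerivWithinAt h (h' y) (Set.Ici y₀) y)
    (hh'' : ∀ y : ℝ, y₀ ≤ y → HasDerivWithinAt h' (h'' y) (Set.Ici y₀) y)
    (hh''cont : ContinuousOn h'' (Set.Ici y₀))
    (hnonneg : ∀ y : ℝ, y₀ ≤ y → 0 ≤ h y)
    (hneg : ∀ y : ℝ, y₀ ≤ y → h' y < 0)
    (hconv : ∀ y : ℝ, y₀ ≤ y → 4 * h' y ≤ h'' y)
    (t₀ : ℝ) (x x' x'' : ℝ → ℝ)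
    (hx' : ∀ t : ℝ, t₀ ≤ t → HasDerivWithinAt x (x' t) (Set.Ici t₀) t)
    (hx'' : ∀ t : ℝ, t₀ ≤ t → HasDerivWithinAt x' (x'' t) (Set.Ici t₀) t)
    (hx''cont : ContinuousOn x'' (Set.Ici t₀))
    (hrel : ∀ t : ℝ, t₀ ≤ t →
      4 * (Real.exp (x t) - 1) = h (x t + 2 * t + Real.log 16))
    (hdom : ∀ t : ℝ, t₀ ≤ t → y₀ ≤ x t + 2 * t + Real.log 16) :
    ∀ t : ℝ, t₀ ≤ t →
      0 ≤ x'' t - 8 * x' t + 16 * (Real.exp (x t) - 1)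
          - h (x t + 2 * t + Real.log 16) * (x' t + 2) ^ 2 :=
  transformed_subsolution_inequality_general y₀ h h' h'' hh' hh'' hnonneg hneg hconv t₀ x x' x'' hx'
    hx'' hrel hdom
end
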